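/- Let r, P : ℂ² → ℝ be smooth and K ∈ ℝ, and set ρ = r·(Kr + P). Then 𝓗_ρ = (2KP·H_r(L_r,L_r) + P²·𝓗_r + 2P·Re[H_r(L_r,L_P)] + B_P) + r·(4K²·H_r(L_r,L_r) + P·Q_P + 2Re[H_P(L_r,L_P)] + 4KP·𝓗_r + 4K·Re[H_r(L_r,L_P)] + 2K·H_P(L_r,L_r)) + r²·(4K²·𝓗_r + 𝓗_P + 2K·Q_P) pointwise. -/

import Mathlib

open Complex Matrix ComplexConjugate

noncomputable section

/-- Wirtinger derivative ∂/∂z of a complex-valued function on ℂ². -/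
def wzC (g : ℂ × ℂ → ℂ) (p : ℂ × ℂ) : ℂ :=
  (fderiv ℝ g p (1, 0) - Complex.I * fderiv ℝ g p (Complex.I, 0)) / 2

/-- Wirtinger derivative ∂/∂z̄ of a complex-valued function on ℂ². -/
def wzbarC (g : ℂ × ℂ → ℂ) (p : ℂ × ℂ) : ℂ :=
  (fderiv ℝ g p (1, 0) + Complex.I * fderiv ℝ g p (Complex.I, 0)) / 2

/-- Wirtinger derivative ∂/∂w of a complex-valued function on ℂ². -/
def wwC (g : ℂ × ℂ → ℂ) (p : ℂ × ℂ) : ℂ :=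
  (fderiv ℝ g p (0, 1) - Complex.I * fderiv ℝ g p (0, Complex.I)) / 2

/-- Wirtinger derivative ∂/∂w̄ of a complex-valued function on ℂ². -/
def wwbarC (g : ℂ × ℂ → ℂ) (p : ℂ × ℂ) : ℂ :=
  (fderiv ℝ g p (0, 1) + Complex.I * fderiv ℝ g p (0, Complex.I)) / 2

/-- f_z for a real-valued function f on ℂ². -/
def wz (f : ℂ × ℂ → ℝ) : ℂ × ℂ → ℂ := wzC (fun q => (f q : ℂ))

/-- f_w for a real-valued function f on ℂ². -/
def ww (f : ℂ × ℂ → ℝ) : ℂ × ℂ → ℂ := wwC (fun q => (f q : ℂ))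

/-- f_{z z̄} -/
def hzz (f : ℂ × ℂ → ℝ) : ℂ × ℂ → ℂ := wzbarC (wz f)

/-- f_{w w̄} -/
def hww (f : ℂ × ℂ → ℝ) : ℂ × ℂ → ℂ := wwbarC (ww f)

/-- f_{z w̄} -/
def hzw (f : ℂ × ℂ → ℝ) : ℂ × ℂ → ℂ := wwbarC (wz f)

/-- The complex Hessian matrix H_f = [[f_{zz̄}, f_{zw̄}],[f_{z̄w}, f_{ww̄}]]. -/
def hessMat (f : ℂ × ℂ → ℝ) (p : ℂ × ℂ) : Matrix (Fin 2) (Fin 2) ℂ :=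
  !![hzz f p, hzw f p; conj (hzw f p), hww f p]

/-- The complex Hessian acting on vectors: H_f(V,W) = V · H_f · conj(W)ᵀ. -/
def Hform (f : ℂ × ℂ → ℝ) (p : ℂ × ℂ) (V W : ℂ × ℂ) : ℂ :=
  hzz f p * V.1 * conj W.1 + hww f p * V.2 * conj W.2
    + hzw f p * V.1 * conj W.2 + conj (hzw f p) * V.2 * conj W.1

/-- The determinant of the complex Hessian, 𝓗_f = f_{zz̄} f_{ww̄} − |f_{zw̄}|², as a real number. -/
def scrH (f : ℂ × ℂ → ℝ) (p : ℂ × ℂ) : ℝ :=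
  (hzz f p * hww f p).re - ‖hzw f p‖ ^ 2

/-- L_f = f_w ∂/∂z − f_z ∂/∂w, identified with the vector (f_w, −f_z). -/
def Lvec (f : ℂ × ℂ → ℝ) (p : ℂ × ℂ) : ℂ × ℂ := (ww f p, - wz f p)

/-- B_P = 4 Re(r_z P_z̄) Re(r_w P_w̄) − |r_z P_w̄ + r_w̄ P_z|². -/
def BP (r P : ℂ × ℂ → ℝ) (p : ℂ × ℂ) : ℝ :=
  4 * (wz r p * conj (wz P p)).re * (ww r p * conj (ww P p)).re
    - ‖wz r p * conj (ww P p) + conj (ww r p) * wz P p‖ ^ 2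

/-- Q_P = r_{zz̄} P_{ww̄} + r_{ww̄} P_{zz̄} − 2 Re(r_{zw̄} P_{z̄w}). -/
def QP (r P : ℂ × ℂ → ℝ) (p : ℂ × ℂ) : ℝ :=
  (hzz r p * hww P p + hww r p * hzz P p).re - 2 * (hzw r p * conj (hzw P p)).re

end


noncomputable section StmtEightHelpers

open Complex ComplexConjugate

/-- A generic Wirtinger-type operator. -/
def Wop (e₁ e₂ : ℂ × ℂ) (s : ℂ) (u : ℂ × ℂ → ℂ) (q : ℂ × ℂ) : ℂ :=
  (fderiv ℝ u q e₁ + s * fderiv ℝ u q e₂) / 2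

variable {u v a b : ℂ × ℂ → ℂ} {f g : ℂ × ℂ → ℝ} {p : ℂ × ℂ} {e₁ e₂ : ℂ × ℂ} {s t : ℂ}

theorem Wop_contDiff (hu : ContDiff ℝ (⊤ : ℕ∞) u) : ContDiff ℝ (⊤ : ℕ∞) (Wop e₁ e₂ s u) :=
  (((hu.fderiv_right (by simp)).clm_apply contDiff_const).add
    (contDiff_const.mul ((hu.fderiv_right (by simp)).clm_apply contDiff_const))).div_const _

theorem Wop_mul (hu : DifferentiableAt ℝ u p) (hv : DifferentiableAt ℝ v p) :
    Wop e₁ e₂ s (fun q => u q * v q) p = Wop e₁ e₂ s u p * v p + u p * Wop e₁ e₂ s v p := by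
  unfold Wop
  rw [fderiv_fun_mul hu hv]
  simp only [ContinuousLinearMap.add_apply, ContinuousLinearMap.smul_apply, smul_eq_mul]
  ring

theorem Wop_add (hu : DifferentiableAt ℝ u p) (hv : DifferentiableAt ℝ v p) :
    Wop e₁ e₂ s (fun q => u q + v q) p = Wop e₁ e₂ s u p + Wop e₁ e₂ s v p := by
  unfold Wop
  rw [fderiv_fun_add hu hv]
  simp only [ContinuousLinearMap.add_apply]
  ring

theorem Wop_lin (c : ℂ) (hu : DifferentiableAt ℝ u p) (hv : DifferentiableAt ℝ v p) :
    Wop e₁ e₂ s (fun q => c * u q + v q) p = c * Wop e₁ e₂ s u p + Wop e₁ e₂ s v p := by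
  unfold Wop
  rw [fderiv_fun_add (hu.const_mul c) hv, fderiv_const_mul hu c]
  simp only [ContinuousLinearMap.add_apply, ContinuousLinearMap.smul_apply, smul_eq_mul]
  ring

theorem fderiv_conj_comp (hu : DifferentiableAt ℝ u p) (e : ℂ × ℂ) :
    fderiv ℝ (fun q => conj (u q)) p e = conj (fderiv ℝ u p e) := by
  have h := (Complex.conjCLE.toContinuousLinearMap.hasFDerivAt (x := u p)).comp p hu.hasFDerivAt
  have h2 := h.fderiv
  rw [show ((fun x => Complex.conjCLE.toContinuousLinearMap x) ∘ u) = fun q => conj (u q) from rfl] at h2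
  rw [h2]
  rfl

theorem Wop_conj (hu : DifferentiableAt ℝ u p) :
    conj (Wop e₁ e₂ s u p) = Wop e₁ e₂ (conj s) (fun q => conj (u q)) p := by
  unfold Wop
  rw [fderiv_conj_comp hu, fderiv_conj_comp hu]
  simp [map_add, _root_.map_mul, map_div₀, Complex.conj_ofNat]

theorem fderiv_ofReal_comp (hf : DifferentiableAt ℝ f p) (e : ℂ × ℂ) :
    fderiv ℝ (fun q => (f q : ℂ)) p e = ((fderiv ℝ f p e : ℝ) : ℂ) := by
  have h := (Complex.ofRealCLM.hasFDerivAt (x := f p)).comp p hf.hasFDerivAt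
  have h2 := h.fderiv
  rw [show ((fun x => Complex.ofRealCLM x) ∘ f) = fun q => ((f q : ℝ) : ℂ) from rfl] at h2
  rw [h2]
  rfl

theorem Wop_coe (hf : DifferentiableAt ℝ f p) :
    Wop e₁ e₂ s (fun q => (f q : ℂ)) p
      = (((fderiv ℝ f p e₁ : ℝ) : ℂ) + s * ((fderiv ℝ f p e₂ : ℝ) : ℂ)) / 2 := by
  unfold Wop
  rw [fderiv_ofReal_comp hf, fderiv_ofReal_comp hf]

theorem Wop_coe_conj (hf : DifferentiableAt ℝ f p) :
    conj (Wop e₁ e₂ s (fun q => (f q : ℂ)) p)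
      = Wop e₁ e₂ (conj s) (fun q => (f q : ℂ)) p := by
  rw [Wop_coe hf, Wop_coe hf]
  simp [map_add, _root_.map_mul, map_div₀, Complex.conj_ofNat]

theorem second_symm (hu : ContDiff ℝ (⊤ : ℕ∞) u) (e e' : ℂ × ℂ) :
    fderiv ℝ (fun q => fderiv ℝ u q e') p e = fderiv ℝ (fun q => fderiv ℝ u q e) p e' := by
  have hdu : Differentiable ℝ (fderiv ℝ u) := (hu.fderiv_right (m := 1) (WithTop.coe_le_coe.mpr le_top)).differentiable one_ne_zero
  have key : ∀ a b : ℂ × ℂ, fderiv ℝ (fun q => fderiv ℝ u q b) p a = fderiv ℝ (fderiv ℝ u) p a b := by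
    intro a b
    rw [fderiv_clm_apply (hdu p) (differentiableAt_const b)]
    simp
  rw [key, key]
  exact second_derivative_symmetric (f' := fderiv ℝ u)
    (fun y => ((hu.differentiable (by simp)) y).hasFDerivAt) (hdu p).hasFDerivAt e e'

theorem Dv_contDiff (hu : ContDiff ℝ (⊤ : ℕ∞) u) (e : ℂ × ℂ) :
    ContDiff ℝ (⊤ : ℕ∞) (fun q => fderiv ℝ u q e) :=
  (hu.fderiv_right (by simp)).clm_apply contDiff_const

theorem fderiv_Wop (hu : ContDiff ℝ (⊤ : ℕ∞) u) (e : ℂ × ℂ) :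
    fderiv ℝ (Wop e₁ e₂ s u) p e
      = (fderiv ℝ (fun q => fderiv ℝ u q e₁) p e + s * fderiv ℝ (fun q => fderiv ℝ u q e₂) p e) / 2 := by
  have h1 : DifferentiableAt ℝ (fun q => fderiv ℝ u q e₁) p :=
    ((Dv_contDiff hu e₁).differentiable (by simp)) p
  have h2 : DifferentiableAt ℝ (fun q => fderiv ℝ u q e₂) p :=
    ((Dv_contDiff hu e₂).differentiable (by simp)) p
  have heq : (fun q => (fderiv ℝ u q e₁ + s * fderiv ℝ u q e₂) / 2)
      = fun q => (2:ℂ)⁻¹ * ((fun q => fderiv ℝ u q e₁) q + s * (fun q => fderiv ℝ u q e₂) q) := by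
    funext q; ring
  unfold Wop
  rw [heq, fderiv_const_mul (h1.fun_add (h2.const_mul s)) _,
    fderiv_fun_add h1 (h2.const_mul s), fderiv_const_mul h2 s]
  simp only [ContinuousLinearMap.add_apply, ContinuousLinearMap.smul_apply,
    ContinuousLinearMap.coe_smul', Pi.smul_apply, smul_eq_mul]
  ring

theorem Wop_comm (hu : ContDiff ℝ (⊤ : ℕ∞) u) :
    Wop e₁ e₂ s (Wop e₁ e₂ t u) p = Wop e₁ e₂ t (Wop e₁ e₂ s u) p := by
  show (fderiv ℝ (Wop e₁ e₂ t u) p e₁ + s * fderiv ℝ (Wop e₁ e₂ t u) p e₂) / 2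
      = (fderiv ℝ (Wop e₁ e₂ s u) p e₁ + t * fderiv ℝ (Wop e₁ e₂ s u) p e₂) / 2
  rw [fderiv_Wop hu e₁, fderiv_Wop hu e₂, fderiv_Wop hu e₁, fderiv_Wop hu e₂,
    second_symm hu e₂ e₁]
  ring

/-! Bridges to the pinned definitions. -/

theorem ofReal_contDiff (hf : ContDiff ℝ (⊤ : ℕ∞) f) : ContDiff ℝ (⊤ : ℕ∞) (fun q => (f q : ℂ)) :=
  Complex.ofRealCLM.contDiff.comp hf

theorem wz_eq (f : ℂ × ℂ → ℝ) :
    wz f = Wop (1, 0) (Complex.I, 0) (-Complex.I) (fun q => (f q : ℂ)) := by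
  funext q; simp only [wz, wzC, Wop]; ring

theorem ww_eq (f : ℂ × ℂ → ℝ) :
    ww f = Wop (0, 1) (0, Complex.I) (-Complex.I) (fun q => (f q : ℂ)) := by
  funext q; simp only [ww, wwC, Wop]; ring

theorem hzz_eq (f : ℂ × ℂ → ℝ) :
    hzz f = Wop (1, 0) (Complex.I, 0) Complex.I
      (Wop (1, 0) (Complex.I, 0) (-Complex.I) (fun q => (f q : ℂ))) := by
  funext q; rw [hzz, wz_eq]; simp only [wzbarC, Wop]

theorem hww_eq (f : ℂ × ℂ → ℝ) :
    hww f = Wop (0, 1) (0, Complex.I) Complex.I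
      (Wop (0, 1) (0, Complex.I) (-Complex.I) (fun q => (f q : ℂ))) := by
  funext q; rw [hww, ww_eq]; simp only [wwbarC, Wop]

theorem hzw_eq (f : ℂ × ℂ → ℝ) :
    hzw f = Wop (0, 1) (0, Complex.I) Complex.I
      (Wop (1, 0) (Complex.I, 0) (-Complex.I) (fun q => (f q : ℂ))) := by
  funext q; rw [hzw, wz_eq]; simp only [wwbarC, Wop]

theorem conj_wz (hf : ContDiff ℝ (⊤ : ℕ∞) f) :
    (fun q => conj (wz f q)) = Wop (1, 0) (Complex.I, 0) Complex.I (fun q => (f q : ℂ)) := by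
  funext q
  rw [wz_eq]
  rw [Wop_coe_conj ((hf.differentiable (by simp)) q)]
  simp

theorem conj_ww (hf : ContDiff ℝ (⊤ : ℕ∞) f) :
    (fun q => conj (ww f q)) = Wop (0, 1) (0, Complex.I) Complex.I (fun q => (f q : ℂ)) := by
  funext q
  rw [ww_eq]
  rw [Wop_coe_conj ((hf.differentiable (by simp)) q)]
  simp

theorem hzz_real (hf : ContDiff ℝ (⊤ : ℕ∞) f) : ∃ x : ℝ, hzz f p = (x : ℂ) := by
  refine ⟨(hzz f p).re, (Complex.conj_eq_iff_re.mp ?_).symm⟩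
  rw [hzz_eq]
  rw [Wop_conj ((Wop_contDiff (ofReal_contDiff hf)).differentiable (by simp) p)]
  have : (fun q => conj (Wop (1, 0) (Complex.I, 0) (-Complex.I) (fun q => (f q : ℂ)) q))
      = Wop (1, 0) (Complex.I, 0) Complex.I (fun q => (f q : ℂ)) := by
    funext q
    rw [Wop_coe_conj ((hf.differentiable (by simp)) q)]
    simp
  rw [show conj Complex.I = -Complex.I by simp, this, Wop_comm (ofReal_contDiff hf)]

theorem hww_real (hf : ContDiff ℝ (⊤ : ℕ∞) f) : ∃ x : ℝ, hww f p = (x : ℂ) := by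
  refine ⟨(hww f p).re, (Complex.conj_eq_iff_re.mp ?_).symm⟩
  rw [hww_eq]
  rw [Wop_conj ((Wop_contDiff (ofReal_contDiff hf)).differentiable (by simp) p)]
  have : (fun q => conj (Wop (0, 1) (0, Complex.I) (-Complex.I) (fun q => (f q : ℂ)) q))
      = Wop (0, 1) (0, Complex.I) Complex.I (fun q => (f q : ℂ)) := by
    funext q
    rw [Wop_coe_conj ((hf.differentiable (by simp)) q)]
    simp
  rw [show conj Complex.I = -Complex.I by simp, this, Wop_comm (ofReal_contDiff hf)]


theorem wz_apply (f : ℂ × ℂ → ℝ) (q : ℂ × ℂ) :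
    wz f q = Wop (1, 0) (Complex.I, 0) (-Complex.I) (fun q => (f q : ℂ)) q :=
  congrFun (wz_eq f) q

theorem ww_apply (f : ℂ × ℂ → ℝ) (q : ℂ × ℂ) :
    ww f q = Wop (0, 1) (0, Complex.I) (-Complex.I) (fun q => (f q : ℂ)) q :=
  congrFun (ww_eq f) q

theorem hzz_apply (f : ℂ × ℂ → ℝ) (q : ℂ × ℂ) :
    hzz f q = Wop (1, 0) (Complex.I, 0) Complex.I
      (Wop (1, 0) (Complex.I, 0) (-Complex.I) (fun q => (f q : ℂ))) q :=
  congrFun (hzz_eq f) q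

theorem hww_apply (f : ℂ × ℂ → ℝ) (q : ℂ × ℂ) :
    hww f q = Wop (0, 1) (0, Complex.I) Complex.I
      (Wop (0, 1) (0, Complex.I) (-Complex.I) (fun q => (f q : ℂ))) q :=
  congrFun (hww_eq f) q

theorem hzw_apply (f : ℂ × ℂ → ℝ) (q : ℂ × ℂ) :
    hzw f q = Wop (0, 1) (0, Complex.I) Complex.I
      (Wop (1, 0) (Complex.I, 0) (-Complex.I) (fun q => (f q : ℂ))) q :=
  congrFun (hzw_eq f) q

theorem conj_wz_apply (hf : ContDiff ℝ (⊤ : ℕ∞) f) (q : ℂ × ℂ) :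
    conj (wz f q) = Wop (1, 0) (Complex.I, 0) Complex.I (fun q => (f q : ℂ)) q :=
  congrFun (conj_wz hf) q

theorem conj_ww_apply (hf : ContDiff ℝ (⊤ : ℕ∞) f) (q : ℂ × ℂ) :
    conj (ww f q) = Wop (0, 1) (0, Complex.I) Complex.I (fun q => (f q : ℂ)) q :=
  congrFun (conj_ww hf) q

/-- Generic second-order product rule for mixed Wirtinger hessian entries. -/
theorem Wop_hess_mul (d₁ d₂ : ℂ × ℂ) (hf : ContDiff ℝ (⊤ : ℕ∞) f) (hg : ContDiff ℝ (⊤ : ℕ∞) g) :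
    Wop d₁ d₂ Complex.I (Wop e₁ e₂ (-Complex.I) (fun q => ((f q * g q : ℝ) : ℂ))) p
      = Wop d₁ d₂ Complex.I (Wop e₁ e₂ (-Complex.I) (fun q => (f q : ℂ))) p * (g p : ℂ)
        + Wop e₁ e₂ (-Complex.I) (fun q => (f q : ℂ)) p
            * Wop d₁ d₂ Complex.I (fun q => (g q : ℂ)) p
        + Wop d₁ d₂ Complex.I (fun q => (f q : ℂ)) p
            * Wop e₁ e₂ (-Complex.I) (fun q => (g q : ℂ)) p
        + (f p : ℂ) * Wop d₁ d₂ Complex.I (Wop e₁ e₂ (-Complex.I) (fun q => (g q : ℂ))) p := by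
  have cf := ofReal_contDiff hf
  have cg := ofReal_contDiff hg
  have dcf : ∀ q, DifferentiableAt ℝ (fun q => (f q : ℂ)) q := fun q => cf.differentiable (by simp) q
  have dcg : ∀ q, DifferentiableAt ℝ (fun q => (g q : ℂ)) q := fun q => cg.differentiable (by simp) q
  have hcoe : (fun q => ((f q * g q : ℝ) : ℂ)) = fun q => (f q : ℂ) * (g q : ℂ) := by
    funext q; push_cast; ring
  have hinner : Wop e₁ e₂ (-Complex.I) (fun q => (f q : ℂ) * (g q : ℂ))
      = fun q => Wop e₁ e₂ (-Complex.I) (fun q => (f q : ℂ)) q * (fun q => (g q : ℂ)) q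
        + (fun q => (f q : ℂ)) q * Wop e₁ e₂ (-Complex.I) (fun q => (g q : ℂ)) q := by
    funext q; exact Wop_mul (dcf q) (dcg q)
  rw [hcoe, hinner,
    Wop_add (((Wop_contDiff cf).differentiable (by simp) p).fun_mul (dcg p))
      ((dcf p).fun_mul ((Wop_contDiff cg).differentiable (by simp) p)),
    Wop_mul ((Wop_contDiff cf).differentiable (by simp) p) (dcg p),
    Wop_mul (dcf p) ((Wop_contDiff cg).differentiable (by simp) p)]
  ring

/-- Generic second-order linearity for mixed Wirtinger hessian entries. -/
theorem Wop_hess_lin (d₁ d₂ : ℂ × ℂ) (K : ℝ) (hf : ContDiff ℝ (⊤ : ℕ∞) f) (hg : ContDiff ℝ (⊤ : ℕ∞) g) :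
    Wop d₁ d₂ Complex.I (Wop e₁ e₂ (-Complex.I) (fun q => ((K * f q + g q : ℝ) : ℂ))) p
      = (K : ℂ) * Wop d₁ d₂ Complex.I (Wop e₁ e₂ (-Complex.I) (fun q => (f q : ℂ))) p
        + Wop d₁ d₂ Complex.I (Wop e₁ e₂ (-Complex.I) (fun q => (g q : ℂ))) p := by
  have cf := ofReal_contDiff hf
  have cg := ofReal_contDiff hg
  have hcoe : (fun q => ((K * f q + g q : ℝ) : ℂ)) = fun q => (K : ℂ) * (f q : ℂ) + (g q : ℂ) := by
    funext q; push_cast; ring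
  have hinner : Wop e₁ e₂ (-Complex.I) (fun q => (K : ℂ) * (f q : ℂ) + (g q : ℂ))
      = fun q => (K : ℂ) * Wop e₁ e₂ (-Complex.I) (fun q => (f q : ℂ)) q
        + Wop e₁ e₂ (-Complex.I) (fun q => (g q : ℂ)) q := by
    funext q
    exact Wop_lin _ (cf.differentiable (by simp) q) (cg.differentiable (by simp) q)
  rw [hcoe, hinner,
    Wop_lin _ ((Wop_contDiff cf).differentiable (by simp) p)
      ((Wop_contDiff cg).differentiable (by simp) p)]

/-- First-order linearity. -/
theorem Wop_fst_lin (K : ℝ) (hf : ContDiff ℝ (⊤ : ℕ∞) f) (hg : ContDiff ℝ (⊤ : ℕ∞) g) :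
    Wop e₁ e₂ s (fun q => ((K * f q + g q : ℝ) : ℂ)) p
      = (K : ℂ) * Wop e₁ e₂ s (fun q => (f q : ℂ)) p
        + Wop e₁ e₂ s (fun q => (g q : ℂ)) p := by
  have hcoe : (fun q => ((K * f q + g q : ℝ) : ℂ)) = fun q => (K : ℂ) * (f q : ℂ) + (g q : ℂ) := by
    funext q; push_cast; ring
  rw [hcoe, Wop_lin _ ((ofReal_contDiff hf).differentiable (by simp) p)
    ((ofReal_contDiff hg).differentiable (by simp) p)]


theorem hzz_mul (hf : ContDiff ℝ (⊤ : ℕ∞) f) (hg : ContDiff ℝ (⊤ : ℕ∞) g) (p : ℂ × ℂ) :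
    hzz (fun q => f q * g q) p = hzz f p * (g p : ℂ) + wz f p * conj (wz g p)
      + conj (wz f p) * wz g p + (f p : ℂ) * hzz g p := by
  rw [hzz_apply (fun q => f q * g q) p, hzz_apply f p, hzz_apply g p,
    conj_wz_apply hf p, conj_wz_apply hg p, wz_apply f p, wz_apply g p]
  exact Wop_hess_mul (1, 0) (Complex.I, 0) hf hg

theorem hww_mul (hf : ContDiff ℝ (⊤ : ℕ∞) f) (hg : ContDiff ℝ (⊤ : ℕ∞) g) (p : ℂ × ℂ) :
    hww (fun q => f q * g q) p = hww f p * (g p : ℂ) + ww f p * conj (ww g p)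
      + conj (ww f p) * ww g p + (f p : ℂ) * hww g p := by
  rw [hww_apply (fun q => f q * g q) p, hww_apply f p, hww_apply g p,
    conj_ww_apply hf p, conj_ww_apply hg p, ww_apply f p, ww_apply g p]
  exact Wop_hess_mul (0, 1) (0, Complex.I) hf hg

theorem hzw_mul (hf : ContDiff ℝ (⊤ : ℕ∞) f) (hg : ContDiff ℝ (⊤ : ℕ∞) g) (p : ℂ × ℂ) :
    hzw (fun q => f q * g q) p = hzw f p * (g p : ℂ) + wz f p * conj (ww g p)
      + conj (ww f p) * wz g p + (f p : ℂ) * hzw g p := by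
  rw [hzw_apply (fun q => f q * g q) p, hzw_apply f p, hzw_apply g p,
    conj_ww_apply hf p, conj_ww_apply hg p, wz_apply f p, wz_apply g p]
  exact Wop_hess_mul (0, 1) (0, Complex.I) hf hg

theorem hzz_lin (K : ℝ) (hf : ContDiff ℝ (⊤ : ℕ∞) f) (hg : ContDiff ℝ (⊤ : ℕ∞) g) (p : ℂ × ℂ) :
    hzz (fun q => K * f q + g q) p = (K : ℂ) * hzz f p + hzz g p := by
  rw [hzz_apply (fun q => K * f q + g q) p, hzz_apply f p, hzz_apply g p]
  exact Wop_hess_lin (1, 0) (Complex.I, 0) K hf hg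

theorem hww_lin (K : ℝ) (hf : ContDiff ℝ (⊤ : ℕ∞) f) (hg : ContDiff ℝ (⊤ : ℕ∞) g) (p : ℂ × ℂ) :
    hww (fun q => K * f q + g q) p = (K : ℂ) * hww f p + hww g p := by
  rw [hww_apply (fun q => K * f q + g q) p, hww_apply f p, hww_apply g p]
  exact Wop_hess_lin (0, 1) (0, Complex.I) K hf hg

theorem hzw_lin (K : ℝ) (hf : ContDiff ℝ (⊤ : ℕ∞) f) (hg : ContDiff ℝ (⊤ : ℕ∞) g) (p : ℂ × ℂ) :
    hzw (fun q => K * f q + g q) p = (K : ℂ) * hzw f p + hzw g p := by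
  rw [hzw_apply (fun q => K * f q + g q) p, hzw_apply f p, hzw_apply g p]
  exact Wop_hess_lin (0, 1) (0, Complex.I) K hf hg

theorem wz_lin (K : ℝ) (hf : ContDiff ℝ (⊤ : ℕ∞) f) (hg : ContDiff ℝ (⊤ : ℕ∞) g) (p : ℂ × ℂ) :
    wz (fun q => K * f q + g q) p = (K : ℂ) * wz f p + wz g p := by
  rw [wz_apply (fun q => K * f q + g q) p, wz_apply f p, wz_apply g p]
  exact Wop_fst_lin K hf hg

theorem ww_lin (K : ℝ) (hf : ContDiff ℝ (⊤ : ℕ∞) f) (hg : ContDiff ℝ (⊤ : ℕ∞) g) (p : ℂ × ℂ) :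
    ww (fun q => K * f q + g q) p = (K : ℂ) * ww f p + ww g p := by
  rw [ww_apply (fun q => K * f q + g q) p, ww_apply f p, ww_apply g p]
  exact Wop_fst_lin K hf hg

end StmtEightHelpers

/-- the main formula for 𝓗_ρ with ρ = r(Kr + P). -/
theorem stmt8 (r P : ℂ × ℂ → ℝ) (hr : ContDiff ℝ (⊤ : ℕ∞) r) (hP : ContDiff ℝ (⊤ : ℕ∞) P)
    (K : ℝ) (p : ℂ × ℂ) :
    scrH (fun q => r q * (K * r q + P q)) p =
      (2 * K * P p * (Hform r p (Lvec r p) (Lvec r p)).re + (P p) ^ 2 * scrH r p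
          + 2 * P p * (Hform r p (Lvec r p) (Lvec P p)).re + BP r P p)
        + r p * (4 * K ^ 2 * (Hform r p (Lvec r p) (Lvec r p)).re + P p * QP r P p
          + 2 * (Hform P p (Lvec r p) (Lvec P p)).re + 4 * K * P p * scrH r p
          + 4 * K * (Hform r p (Lvec r p) (Lvec P p)).re
          + 2 * K * (Hform P p (Lvec r p) (Lvec r p)).re)
        + (r p) ^ 2 * (4 * K ^ 2 * scrH r p + scrH P p + 2 * K * QP r P p) := by
  have hg : ContDiff ℝ (⊤ : ℕ∞) (fun q => K * r q + P q) := (contDiff_const.mul hr).add hP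
  obtain ⟨A, hA⟩ := hzz_real (p := p) hr
  obtain ⟨B, hB⟩ := hww_real (p := p) hr
  obtain ⟨A1, hA1⟩ := hzz_real (p := p) hP
  obtain ⟨B1, hB1⟩ := hww_real (p := p) hP
  unfold scrH BP QP Hform Lvec
  rw [hzz_mul hr hg p, hww_mul hr hg p, hzw_mul hr hg p,
    hzz_lin K hr hP p, hww_lin K hr hP p, hzw_lin K hr hP p,
    wz_lin K hr hP p, ww_lin K hr hP p, hA, hB, hA1, hB1]
  simp only [Complex.sq_norm, Complex.normSq_apply, Complex.mul_re, Complex.mul_im,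
    Complex.add_re, Complex.add_im, Complex.sub_re, Complex.sub_im, Complex.neg_re,
    Complex.neg_im, Complex.conj_re, Complex.conj_im, Complex.ofReal_re, Complex.ofReal_im,
    map_add, _root_.map_mul, Complex.conj_ofReal, Complex.conj_conj]
  ring
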